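/- arXiv:1502.05828 — 3 statements merged into one kernel-verified Lean document; each statement's English description precedes it below -/
import Mathlib

section
/- Let G = (V,E) be a finite simple graph on n vertices with independence number α, and let p ≥ 1 be an integer. Let G' be the graph obtained from G by attaching to each vertex v ∈ V exactly p new pendant vertices, each adjacent only to v (so G' has n(p+1) vertices). Then the maximum size μ of a minimal vertex cover of G' satisfies p·α + n − α ≤ μ ≤ p·α + n. -/
/-- `C` is a vertex cover: every edge has an endpoint in `C`. -/
def IsVertexCover {V : Type*} (G : SimpleGraph V) (C : Set V) : Prop :=
  ∀ ⦃u v⦄, G.Adj u v → u ∈ C ∨ v ∈ C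

/-- `C` is a minimal vertex cover: a vertex cover no proper subset of which is one. -/
def IsMinimalVertexCover {V : Type*} (G : SimpleGraph V) (C : Set V) : Prop :=
  IsVertexCover G C ∧ ∀ D : Set V, D ⊂ C → ¬ IsVertexCover G D

/-- `I` is an independent set: no two of its vertices are adjacent. -/
def IsIndepSet {V : Type*} (G : SimpleGraph V) (I : Set V) : Prop :=
  ∀ ⦃u⦄, u ∈ I → ∀ ⦃v⦄, v ∈ I → ¬ G.Adj u v

/-- The graph obtained from `G` by attaching `p` new pendant vertices to each
vertex: `Sum.inl u` are the original vertices, and `Sum.inr (v, i)` is the `i`-th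
pendant vertex attached to `v` (adjacent only to `Sum.inl v`). -/
def pendantGraph {V : Type*} (G : SimpleGraph V) (p : ℕ) :
    SimpleGraph (V ⊕ V × Fin p) where
  Adj x y :=
    match x, y with
    | Sum.inl u, Sum.inl v => G.Adj u v
    | Sum.inl u, Sum.inr (v, _) => u = v
    | Sum.inr (v, _), Sum.inl u => u = v
    | Sum.inr _, Sum.inr _ => False
  symm := by
    constructor
    rintro (u | ⟨v, i⟩) (u' | ⟨v', i'⟩) h
    · exact G.symm.symm _ _ h
    · exact h
    · exact h
    · exact h
  loopless := by
    constructor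
    rintro (u | ⟨v, i⟩) h
    · exact G.loopless.irrefl u h
    · exact h

/-!
Each pendant vertex has a single neighbour `v`, so a minimal vertex cover of the pendant graph
contains all `p` pendants of `v` exactly when it omits `v`. Hence the minimal covers are exactly
`A ∪ {pendants of vertices outside A}` for `A` a minimal vertex cover of `G`, of size
`|A| + p·|V \ A|`, and `V \ A` is independent. Taking `V \ A` a maximum independent set gives the
lower bound; `|V \ A| ≤ α` gives the upper one.
-/

section VertexCover

variable {V : Type*} {G : SimpleGraph V} {C I : Set V}

theorem isVertexCover_iff_isIndepSet_compl : IsVertexCover G C ↔ IsIndepSet G Cᶜ := by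
  refine ⟨fun hC u hu v hv huv => ?_, fun hI u v huv => ?_⟩
  · rcases hC huv with h | h
    exacts [hu h, hv h]
  · by_contra! h
    exact hI h.1 h.2 huv

theorem isMinimalVertexCover_iff :
    IsMinimalVertexCover G C ↔ IsVertexCover G C ∧ ∀ v ∈ C, ∃ w ∉ C, G.Adj v w := by
  refine ⟨fun ⟨hC, hmin⟩ => ⟨hC, fun v hv => ?_⟩, fun ⟨hC, hnbr⟩ => ⟨hC, fun D hDC hD => ?_⟩⟩
  · by_contra! hnbr
    refine hmin (C \ {v}) (Set.sdiff_singleton_ssubset.2 hv) fun a b hab => ?_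
    rcases hC hab with ha | hb
    · by_cases hav : a = v
      · subst hav
        exact Or.inr ⟨by_contra fun hb => hnbr b hb hab, (G.ne_of_adj hab).symm⟩
      · exact Or.inl ⟨ha, hav⟩
    · by_cases hbv : b = v
      · subst hbv
        exact Or.inl ⟨by_contra fun ha => hnbr a ha hab.symm, G.ne_of_adj hab⟩
      · exact Or.inr ⟨hb, hbv⟩
  · obtain ⟨v, hvC, hvD⟩ := Set.exists_of_ssubset hDC
    obtain ⟨w, hwC, hvw⟩ := hnbr v hvC
    rcases hD hvw with h | h
    exacts [hvD h, hwC (hDC.subset h)]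

theorem IsIndepSet.insert (hI : IsIndepSet G I) {u : V} (hu : ∀ w ∈ I, ¬ G.Adj u w) :
    IsIndepSet G (insert u I) := by
  rintro a (rfl | ha) b (rfl | hb) hab
  exacts [G.loopless.irrefl _ hab, hu b hb hab, hu a ha hab.symm, hI ha hb hab]

theorem IsIndepSet.isMinimalVertexCover_compl [Finite V] (hI : IsIndepSet G I)
    (hmax : ∀ J, IsIndepSet G J → J.ncard ≤ I.ncard) : IsMinimalVertexCover G Iᶜ := by
  refine isMinimalVertexCover_iff.2
    ⟨isVertexCover_iff_isIndepSet_compl.2 (by rwa [compl_compl]), fun u hu => ?_⟩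
  by_contra! hnbr
  have := hmax _ (hI.insert fun w hw => hnbr w (not_not_intro hw))
  rw [Set.ncard_insert_of_notMem hu] at this
  omega

end VertexCover

section PendantGraph

variable {V : Type*} {G : SimpleGraph V} {p : ℕ}

@[simp]
theorem pendantGraph_not_adj_inr_inr {x y : V × Fin p} :
    ¬ (pendantGraph G p).Adj (.inr x) (.inr y) := id

def pendantCover (p : ℕ) (A : Set V) : Set (V ⊕ V × Fin p) :=
  Sum.inl '' A ∪ Sum.inr '' (Aᶜ ×ˢ Set.univ)

@[simp]
theorem inl_mem_pendantCover {A : Set V} {u : V} :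
    (.inl u : V ⊕ V × Fin p) ∈ pendantCover p A ↔ u ∈ A := by
  simp [pendantCover]

@[simp]
theorem inr_mem_pendantCover {A : Set V} {v : V} {i : Fin p} :
    (.inr (v, i) : V ⊕ V × Fin p) ∈ pendantCover p A ↔ v ∉ A := by
  simp [pendantCover]

theorem ncard_pendantCover [Finite V] (A : Set V) :
    (pendantCover p A).ncard = A.ncard + Aᶜ.ncard * p := by
  rw [pendantCover, Set.ncard_union_eq (Set.disjoint_left.2 (by simp)),
    Set.ncard_image_of_injective _ Sum.inl_injective,
    Set.ncard_image_of_injective _ Sum.inr_injective, Set.ncard_prod]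
  simp

theorem isMinimalVertexCover_pendantCover {A : Set V} (hA : IsMinimalVertexCover G A) :
    IsMinimalVertexCover (pendantGraph G p) (pendantCover p A) := by
  obtain ⟨hcov, hnbr⟩ := isMinimalVertexCover_iff.1 hA
  refine isMinimalVertexCover_iff.2 ⟨?_, ?_⟩
  · rintro (u | ⟨v, i⟩) (u' | ⟨v', i'⟩) hadj
    · simpa using hcov hadj
    · obtain rfl : u = v' := hadj
      simpa using em (u ∈ A)
    · obtain rfl : u' = v := hadj
      simpa using em' (u' ∈ A)
    · exact absurd hadj pendantGraph_not_adj_inr_inr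
  · rintro (u | ⟨v, i⟩) hu
    · obtain ⟨w, hw, huw⟩ := hnbr u (inl_mem_pendantCover.1 hu)
      exact ⟨.inl w, by simpa using hw, huw⟩
    · exact ⟨.inl v, by simpa using hu, rfl⟩

theorem IsVertexCover.preimage_inl {C : Set (V ⊕ V × Fin p)}
    (hC : IsVertexCover (pendantGraph G p) C) : IsVertexCover G (Sum.inl ⁻¹' C) :=
  fun _ _ huv => hC huv

theorem IsMinimalVertexCover.eq_pendantCover {C : Set (V ⊕ V × Fin p)}
    (hC : IsMinimalVertexCover (pendantGraph G p) C) :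
    C = pendantCover p (Sum.inl ⁻¹' C) := by
  obtain ⟨hcov, hnbr⟩ := isMinimalVertexCover_iff.1 hC
  ext (u | ⟨v, i⟩)
  · simp
  · simp only [inr_mem_pendantCover, Set.mem_preimage]
    refine ⟨fun hvi hv => ?_, fun hv => ?_⟩
    · -- the only neighbour of a pendant is `inl v`, which lies in `C`
      obtain ⟨u | w, hw, hadj⟩ := hnbr _ hvi
      · obtain rfl : u = v := hadj
        exact hw hv
      · exact pendantGraph_not_adj_inr_inr hadj
    · exact (hcov (show (pendantGraph G p).Adj (.inl v) (.inr (v, i)) from rfl)).resolve_left hv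

end PendantGraph

theorem maxMinimalVertexCover_pendantGraph_general {V : Type*} [Fintype V]
    (G : SimpleGraph V) (n : ℕ) (hn : n = Fintype.card V)
    (α : ℕ) (hα : IsGreatest {k | ∃ I : Set V, IsIndepSet G I ∧ I.ncard = k} α)
    (p : ℕ)
    (μ : ℕ)
    (hμ : IsGreatest
      {k | ∃ C : Set (V ⊕ V × Fin p),
        IsMinimalVertexCover (pendantGraph G p) C ∧ C.ncard = k} μ) :
    p * α + n - α ≤ μ ∧ μ ≤ p * α + n := by
  obtain ⟨⟨I, hI, rfl⟩, hαmax⟩ := hα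
  have hsplit (A : Set V) : A.ncard + Aᶜ.ncard = n := by
    rw [Set.ncard_add_ncard_compl, Nat.card_eq_fintype_card, hn]
  constructor
  · have hIcov := hI.isMinimalVertexCover_compl fun J hJ => hαmax ⟨J, hJ, rfl⟩
    have hμI := hμ.2 ⟨_, isMinimalVertexCover_pendantCover hIcov, rfl⟩
    rw [ncard_pendantCover, compl_compl] at hμI
    have hsplitI := hsplit I
    rw [mul_comm]
    omega
  · obtain ⟨C, hC, rfl⟩ := hμ.1
    rw [hC.eq_pendantCover, ncard_pendantCover, mul_comm p]
    set A := Sum.inl ⁻¹' C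
    have hAc : Aᶜ.ncard ≤ I.ncard :=
      hαmax ⟨Aᶜ, isVertexCover_iff_isIndepSet_compl.1 hC.1.preimage_inl, rfl⟩
    have hsplitA := hsplit A
    have hAcp := Nat.mul_le_mul_right p hAc
    omega

/-- If `G` has `n` vertices and independence number `α`, and `G'` is
obtained by attaching `p ≥ 1` pendant vertices to each vertex of `G`, then the
maximum size `μ` of a minimal vertex cover of `G'` satisfies
`p·α + n − α ≤ μ ≤ p·α + n`. -/
theorem maxMinimalVertexCover_pendantGraph {V : Type*} [Fintype V]
    (G : SimpleGraph V) (n : ℕ) (hn : n = Fintype.card V)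
    (α : ℕ) (hα : IsGreatest {k | ∃ I : Set V, IsIndepSet G I ∧ I.ncard = k} α)
    (p : ℕ) (hp : 1 ≤ p)
    (μ : ℕ)
    (hμ : IsGreatest
      {k | ∃ C : Set (V ⊕ V × Fin p),
        IsMinimalVertexCover (pendantGraph G p) C ∧ C.ncard = k} μ) :
    p * α + n - α ≤ μ ∧ μ ≤ p * α + n :=
  maxMinimalVertexCover_pendantGraph_general G n hn α hα p μ hμ
end

section
/- Let V be a finite set and d : V × V → ℝ a distance function satisfying the triangle inequality d(x,z) ≤ d(x,y) + d(y,z) for all x, y, z ∈ V. Let σ be a permutation of V without fixed points, let W ⊆ V contain exactly one element from each cycle of σ (i.e. every v ∈ V lies in the same σ-cycle as exactly one element of W), and let τ be a permutation of V that fixes every element of V \ W and whose elements of W all lie in a single common τ-cycle. Then there exists a permutation ρ of V whose elements all lie in a single ρ-cycle (a Hamiltonian circuit on V) such that Σ_{v∈V} d(v, ρ(v)) ≤ Σ_{v∈V} d(v, σ(v)) + Σ_{v∈V} d(v, τ(v)). -/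
/-- (ATSP patching lemma) Given a distance function `d` on a finite
set `V` satisfying the triangle inequality, a fixed-point-free permutation `σ`
(a spanning union of circuits), a set `W` containing exactly one element of each
`σ`-cycle, and a permutation `τ` fixing everything outside `W` whose elements of
`W` all lie in one common `τ`-cycle, there is a permutation `ρ` with all elements
of `V` in one `ρ`-cycle (a Hamiltonian circuit) of cost at most
`cost(σ) + cost(τ)`. -/
theorem atsp_patching {V : Type*} [Fintype V]
    (d : V → V → ℝ)
    (htri : ∀ x y z : V, d x z ≤ d x y + d y z)
    (σ : Equiv.Perm V) (hσ : ∀ v : V, σ v ≠ v)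
    (W : Set V) (hW : ∀ v : V, ∃! w : V, w ∈ W ∧ σ.SameCycle v w)
    (τ : Equiv.Perm V) (hτfix : ∀ v : V, v ∉ W → τ v = v)
    (hτcyc : ∀ w ∈ W, ∀ w' ∈ W, τ.SameCycle w w') :
    ∃ ρ : Equiv.Perm V, (∀ x y : V, ρ.SameCycle x y) ∧
      ∑ v : V, d v (ρ v) ≤ ∑ v : V, d v (σ v) + ∑ v : V, d v (τ v) := by
  classical
  set ρ : Equiv.Perm V := τ * σ with hρ
  -- W is τ-invariant
  have hWτ : ∀ w ∈ W, τ w ∈ W := by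
    intro w hw
    by_contra h
    have h1 : τ (τ w) = τ w := hτfix _ h
    have h2 : τ w = w := τ.injective h1
    rw [h2] at h; exact h hw
  -- Key iteration lemma
  have key : ∀ (v : V) (m : ℕ), (∀ i, 1 ≤ i → i ≤ m → (σ ^ i) v ∉ W) →
      (ρ ^ m) v = (σ ^ m) v := by
    intro v m
    induction m with
    | zero => intro _; simp
    | succ n ih =>
      intro h
      have hn : (ρ ^ n) v = (σ ^ n) v := ih fun i h1 h2 => h i h1 (h2.trans n.le_succ)
      have : (ρ ^ (n + 1)) v = ρ ((ρ ^ n) v) := by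
        rw [pow_succ']; rfl
      rw [this, hn, hρ]
      have hs : (σ ^ (n + 1)) v = σ ((σ ^ n) v) := by rw [pow_succ']; rfl
      have : τ (σ ((σ ^ n) v)) = σ ((σ ^ n) v) := by
        apply hτfix
        rw [← hs]; exact h (n + 1) (Nat.le_add_left 1 n) le_rfl
      simpa [hs] using this
  -- every v eventually hits W under positive σ-powers
  have hit : ∀ v : V, ∃ m : ℕ, 1 ≤ m ∧ (σ ^ m) v ∈ W := by
    intro v
    obtain ⟨w, ⟨hwW, hwc⟩, _⟩ := hW v
    obtain ⟨i, hi0, _, hie⟩ := hwc.exists_pow_eq''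
    exact ⟨i, hi0, hie ▸ hwW⟩
  -- for each v: ρ-same-cycle with τ w where w is a W-element on v's σ-cycle,
  -- obtained at the FIRST positive time hitting W
  have reach : ∀ v : V, ∃ w : V, w ∈ W ∧ σ.SameCycle v w ∧ ρ.SameCycle v (τ w) := by
    intro v
    have hex := hit v
    set m := Nat.find hex with hm
    have hm1 : 1 ≤ m := (Nat.find_spec hex).1
    have hmW : (σ ^ m) v ∈ W := (Nat.find_spec hex).2
    refine ⟨(σ ^ m) v, hmW, ⟨(m : ℤ), by simp⟩, ?_⟩
    have hmin : ∀ i, 1 ≤ i → i ≤ m - 1 → (σ ^ i) v ∉ W := by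
      intro i h1 h2 hiW
      exact Nat.find_min hex (show i < m by omega) ⟨h1, hiW⟩
    have hkey : (ρ ^ (m - 1)) v = (σ ^ (m - 1)) v := key v (m - 1) hmin
    have hstep : (ρ ^ m) v = ρ ((ρ ^ (m - 1)) v) := by
      conv_lhs => rw [show m = (m - 1) + 1 by omega, pow_succ']
      rfl
    have : (ρ ^ m) v = τ ((σ ^ m) v) := by
      rw [hstep, hkey, hρ]
      have : σ ((σ ^ (m - 1)) v) = (σ ^ m) v := by
        conv_rhs => rw [show m = (m - 1) + 1 by omega, pow_succ']
        rfl
      simp [Equiv.Perm.mul_apply, this]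
    exact ⟨(m : ℤ), by simpa using this⟩
  -- each w ∈ W is ρ-same-cycle with τ w
  have stepW : ∀ w ∈ W, ρ.SameCycle w (τ w) := by
    intro w hw
    obtain ⟨w', hw'W, hw'c, hw'ρ⟩ := reach w
    obtain ⟨u, _, hu⟩ := hW w
    have e1 : w' = u := hu w' ⟨hw'W, hw'c⟩
    have e2 : w = u := hu w ⟨hw, Equiv.Perm.SameCycle.refl _ _⟩
    rwa [e1, ← e2] at hw'ρ
  -- hence all τ-iterates of w ∈ W are ρ-same-cycle with w
  have iterW : ∀ (n : ℕ) (w : V), w ∈ W → ρ.SameCycle w ((τ ^ n) w) := by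
    intro n
    induction n with
    | zero => intro w _; simpa using Equiv.Perm.SameCycle.refl ρ w
    | succ k ih =>
      intro w hw
      have hk : (τ ^ k) w ∈ W := by
        clear ih
        induction k with
        | zero => simpa
        | succ j ihj =>
          have : (τ ^ (j + 1)) w = τ ((τ ^ j) w) := by rw [pow_succ']; rfl
          rw [this]; exact hWτ _ ihj
      have h1 := ih w hw
      have h2 := stepW _ hk
      have : (τ ^ (k + 1)) w = τ ((τ ^ k) w) := by rw [pow_succ']; rfl
      rw [this]
      exact h1.trans h2
  -- all elements of W are mutually ρ-same-cycle
  have allW : ∀ w ∈ W, ∀ w' ∈ W, ρ.SameCycle w w' := by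
    intro w hw w' hw'
    obtain ⟨i, _, _, hie⟩ := (hτcyc w hw w' hw').exists_pow_eq''
    exact hie ▸ iterW i w hw
  refine ⟨ρ, ?_, ?_⟩
  · intro x y
    obtain ⟨wx, hwx, _, hx⟩ := reach x
    obtain ⟨wy, hwy, _, hy⟩ := reach y
    exact hx.trans (((allW _ (hWτ _ hwx) _ (hWτ _ hwy))).trans hy.symm)
  · have hb : ∀ v : V, d v (ρ v) ≤ d v (σ v) + d (σ v) (τ (σ v)) := by
      intro v; exact htri v (σ v) (τ (σ v))
    calc ∑ v : V, d v (ρ v) ≤ ∑ v : V, (d v (σ v) + d (σ v) (τ (σ v))) :=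
          Finset.sum_le_sum fun v _ => hb v
      _ = ∑ v : V, d v (σ v) + ∑ v : V, d (σ v) (τ (σ v)) := Finset.sum_add_distrib
      _ = ∑ v : V, d v (σ v) + ∑ v : V, d v (τ v) := by
          congr 1
          exact Fintype.sum_equiv σ _ _ fun v => rfl
end

section
/- Let G = (V,E) be a finite simple graph, let L ⊆ V be an independent set, let r ≥ 1 be a natural number, and let V \ L = V_1 ∪ ⋯ ∪ V_r be a partition. Then there exist an index i ∈ {1,…,r} and an independent set S ⊆ V_i such that r · |N(S ∪ (L \ N(S)))| ≥ μ, where μ denotes the maximum size of a minimal vertex cover of G. Consequently, since for any independent set I there is a minimal vertex cover of size at least |N(I)|, there is a minimal vertex cover of G of size at least μ/r obtained from the independent set S ∪ (L \ N(S)). -/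
/-- The open neighborhood of a set `S` of vertices: all vertices having a neighbor in `S`. -/
def nbhd {V : Type*} (G : SimpleGraph V) (S : Set V) : Set V :=
  {v | ∃ u ∈ S, G.Adj v u}

/-! A maximum minimal vertex cover `C*` satisfies `C* ⊆ N(R)` for the independent set `R = C*ᶜ`.
A neighbour of `R` is a neighbour either of `R ∩ P i` for some block `i`, or of a vertex of `R ∩ L`,
and such a vertex lies in `L \ N(R ∩ P i)` for every `i` because `R` is independent. So the `r` sets
`N((R ∩ P i) ∪ (L \ N(R ∩ P i)))` cover `C*`, and one of them has at least `μ / r` elements.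
The neighbourhood of an independent set `I` lies in `Jᶜ` for any maximal independent set `J ⊇ I`,
and `Jᶜ` is a minimal vertex cover. -/

section

variable {V : Type*} {G : SimpleGraph V}

lemma isIndepSet_compl_iff {C : Set V} : IsIndepSet G Cᶜ ↔ IsVertexCover G C := by
  refine ⟨fun h u v huv => ?_, fun h u hu v hv huv => (h huv).elim hu hv⟩
  by_contra! hnot
  exact h hnot.1 hnot.2 huv

lemma IsIndepSet.mono {S T : Set V} (hT : IsIndepSet G T) (hST : S ⊆ T) : IsIndepSet G S :=
  fun _ hu _ hv => hT (hST hu) (hST hv)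

lemma IsIndepSet.union_sdiff_nbhd {S L : Set V} (hS : IsIndepSet G S) (hL : IsIndepSet G L) :
    IsIndepSet G (S ∪ (L \ nbhd G S)) := by
  rintro u (hu | hu) v (hv | hv) huv
  · exact hS hu hv huv
  · exact hv.2 ⟨u, hu, huv.symm⟩
  · exact hu.2 ⟨v, hv, huv⟩
  · exact hL hu.1 hv.1 huv

lemma IsIndepSet.nbhd_subset_compl {I J : Set V} (hJ : IsIndepSet G J) (hIJ : I ⊆ J) :
    nbhd G I ⊆ Jᶜ :=
  fun _ ⟨_, hu, hvu⟩ hv => hJ hv (hIJ hu) hvu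

lemma isMinimalVertexCover_iff_s14 {C : Set V} :
    IsMinimalVertexCover G C ↔ IsVertexCover G C ∧ C ⊆ nbhd G Cᶜ := by
  refine and_congr_right fun hC => ⟨fun hmin v hv => ?_, fun hsub D hDC hD => ?_⟩
  · have hnot := hmin _ (Set.sdiff_singleton_ssubset.mpr hv)
    simp only [IsVertexCover, not_forall] at hnot
    obtain ⟨a, b, hab, hnot⟩ := hnot
    simp only [Set.mem_sdiff, Set.mem_singleton_iff, not_or, not_and, not_not] at hnot
    rcases hC hab with ha | hb
    · obtain rfl := hnot.1 ha
      exact ⟨b, fun hb => hab.ne (hnot.2 hb).symm, hab⟩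
    · obtain rfl := hnot.2 hb
      exact ⟨a, fun ha => hab.ne (hnot.1 ha), hab.symm⟩
  · obtain ⟨w, hwC, hwD⟩ := Set.exists_of_ssubset hDC
    obtain ⟨u, hu, hwu⟩ := hsub hwC
    exact (hD hwu).elim hwD fun huD => hu (hDC.subset huD)

lemma IsMinimalVertexCover.subset_nbhd_compl {C : Set V} (hC : IsMinimalVertexCover G C) :
    C ⊆ nbhd G Cᶜ :=
  (isMinimalVertexCover_iff_s14.mp hC).2

lemma compl_subset_nbhd_of_maximal {J : Set V} (hJ : Maximal (IsIndepSet G) J) :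
    Jᶜ ⊆ nbhd G J := by
  intro w hw
  by_contra hwN
  have hind : IsIndepSet G (insert w J) := by
    rintro u (rfl | hu) v (rfl | hv) huv
    · exact huv.ne rfl
    · exact hwN ⟨v, hv, huv⟩
    · exact hwN ⟨u, hu, huv.symm⟩
    · exact hJ.prop hu hv huv
  exact hw (hJ.mem_of_prop_insert hind)

lemma isMinimalVertexCover_compl_of_maximal {J : Set V} (hJ : Maximal (IsIndepSet G) J) :
    IsMinimalVertexCover G Jᶜ := by
  refine isMinimalVertexCover_iff_s14.mpr ⟨isIndepSet_compl_iff.mp ?_, ?_⟩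
  · simpa using hJ.prop
  · simpa using compl_subset_nbhd_of_maximal hJ

lemma IsIndepSet.exists_isMinimalVertexCover_nbhd_subset [Finite V] {I : Set V}
    (hI : IsIndepSet G I) : ∃ C, IsMinimalVertexCover G C ∧ nbhd G I ⊆ C := by
  obtain ⟨J, hIJ, hJ⟩ := Finite.exists_le_maximal hI
  exact ⟨Jᶜ, isMinimalVertexCover_compl_of_maximal hJ, hJ.prop.nbhd_subset_compl hIJ⟩

lemma IsIndepSet.nbhd_subset_iUnion_nbhd_blocks {ι : Type*} [Nonempty ι] {R L : Set V}
    {P : ι → Set V} (hR : IsIndepSet G R) (hcover : Lᶜ ⊆ ⋃ i, P i) :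
    nbhd G R ⊆ ⋃ i, nbhd G ((R ∩ P i) ∪ (L \ nbhd G (R ∩ P i))) := by
  rintro v ⟨u, hu, hvu⟩
  by_cases huL : u ∈ L
  · refine Set.mem_iUnion.mpr ⟨Classical.arbitrary ι, u, Or.inr ⟨huL, ?_⟩, hvu⟩
    exact fun ⟨w, hw, huw⟩ => hR hu hw.1 huw
  · obtain ⟨i, hi⟩ := Set.mem_iUnion.mp (hcover huL)
    exact Set.mem_iUnion.mpr ⟨i, u, Or.inl ⟨hu, hi⟩, hvu⟩

end

lemma Fintype.exists_le_card_mul_of_le_sum {ι : Type*} [Fintype ι] [Nonempty ι] {m : ℕ}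
    {f : ι → ℕ} (h : m ≤ ∑ i, f i) : ∃ i, m ≤ Fintype.card ι * f i := by
  obtain ⟨i, -, hi⟩ := Finset.exists_le_of_sum_le Finset.univ_nonempty
    (f := fun _ => m) (g := fun i => Fintype.card ι * f i) (by
      rw [Finset.sum_const, ← Finset.mul_sum, smul_eq_mul, Finset.card_univ]
      exact Nat.mul_le_mul_left _ h)
  exact ⟨i, hi⟩

theorem maxMinimalVertexCover_approx_general {V : Type*} [Fintype V]
    (G : SimpleGraph V) (L : Set V) (hL : IsIndepSet G L)
    (r : ℕ) (hr : 1 ≤ r) (P : Fin r → Set V)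
    (hcover : (⋃ i, P i) = Lᶜ)
    (μ : ℕ)
    (hμ : IsGreatest {k | ∃ C : Set V, IsMinimalVertexCover G C ∧ C.ncard = k} μ) :
    ∃ i : Fin r, ∃ S : Set V, S ⊆ P i ∧ IsIndepSet G S ∧
      μ ≤ r * (nbhd G (S ∪ (L \ nbhd G S))).ncard ∧
      ∃ C : Set V, IsMinimalVertexCover G C ∧
        nbhd G (S ∪ (L \ nbhd G S)) ⊆ C ∧ μ ≤ r * C.ncard := by
  obtain ⟨⟨Cmax, hCmax, rfl⟩, -⟩ := hμ
  have : Nonempty (Fin r) := ⟨⟨0, hr⟩⟩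
  have hR : IsIndepSet G Cmaxᶜ := isIndepSet_compl_iff.mpr hCmax.1
  set T : Fin r → Set V := fun i => nbhd G ((Cmaxᶜ ∩ P i) ∪ (L \ nbhd G (Cmaxᶜ ∩ P i)))
  have hsum : Cmax.ncard ≤ ∑ i, (T i).ncard :=
    calc Cmax.ncard
      _ ≤ (⋃ i, T i).ncard := Set.ncard_le_ncard (hCmax.subset_nbhd_compl.trans
          (hR.nbhd_subset_iUnion_nbhd_blocks hcover.ge))
      _ ≤ ∑ i, (T i).ncard := Set.ncard_iUnion_le_of_fintype T
  obtain ⟨i, hi⟩ := Fintype.exists_le_card_mul_of_le_sum hsum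
  rw [Fintype.card_fin] at hi
  have hS : IsIndepSet G (Cmaxᶜ ∩ P i) := hR.mono Set.inter_subset_left
  obtain ⟨C, hC, hNC⟩ := (hS.union_sdiff_nbhd hL).exists_isMinimalVertexCover_nbhd_subset
  exact ⟨i, _, Set.inter_subset_right, hS, hi, C, hC, hNC,
    hi.trans (Nat.mul_le_mul_left r (Set.ncard_le_ncard hNC))⟩

/-- Correctness of the √r-approximation scheme for Max Minimal
Vertex Cover: if `L` is independent and `V \ L` is partitioned into `V_1, …, V_r`,
then some block `V_i` contains an independent set `S` with
`r · |N(S ∪ (L \ N(S)))| ≥ μ`, where `μ` is the maximum size of a minimal vertex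
cover; consequently there is a minimal vertex cover of size at least `μ / r`
containing `N(S ∪ (L \ N(S)))`. -/
theorem maxMinimalVertexCover_approx {V : Type*} [Fintype V]
    (G : SimpleGraph V) (L : Set V) (hL : IsIndepSet G L)
    (r : ℕ) (hr : 1 ≤ r) (P : Fin r → Set V)
    (hcover : (⋃ i, P i) = Lᶜ)
    (hdisj : ∀ i j : Fin r, i ≠ j → Disjoint (P i) (P j))
    (μ : ℕ)
    (hμ : IsGreatest {k | ∃ C : Set V, IsMinimalVertexCover G C ∧ C.ncard = k} μ) :
    ∃ i : Fin r, ∃ S : Set V, S ⊆ P i ∧ IsIndepSet G S ∧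
      μ ≤ r * (nbhd G (S ∪ (L \ nbhd G S))).ncard ∧
      ∃ C : Set V, IsMinimalVertexCover G C ∧
        nbhd G (S ∪ (L \ nbhd G S)) ⊆ C ∧ μ ≤ r * C.ncard :=
  maxMinimalVertexCover_approx_general G L hL r hr P hcover μ hμ
end
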